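/- There exists a linear subspace C of the even-weight subspace of F_2^M, all of whose nonzero elements have Hamming weight at least 2N+2, with dim C ≥ M - 1 - ⌈log₂(∑_{j=0}^{N} C(M, 2j))⌉ (Gilbert–Varshamov bound for even-weight codes). -/

import Mathlib

/-!
Gilbert–Varshamov argument: take `C` maximal among the subspaces of the even-weight space `E`
whose nonzero vectors have weight `≥ 2N + 2`. By maximality every `x ∈ E` lies within distance
`2N + 1` of `C`, and `x - c` is again even, so `E` is covered by the translates `c + B` of the set
`B` of even vectors of weight `≤ 2N + 1`. Hence `2 ^ (M - 1) ≤ |E| ≤ |C| · |B| ≤ 2 ^ dim C · S`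
with `S = ∑_{j ≤ N} C(M, 2j)`.
-/

open Finset Module Pointwise

section EvenWeight

variable {ι : Type*} [Fintype ι]

theorem ZMod.two_sum_eq_hammingNorm (v : ι → ZMod 2) : ∑ i, v i = (hammingNorm v : ZMod 2) := by
  have hone : ∀ a : ZMod 2, a ≠ 0 → a = 1 := by decide
  rw [← sum_filter_ne_zero, sum_congr rfl fun i hi => hone _ (mem_filter.1 hi).2]
  simp [hammingNorm]

variable (ι) in
def evenWeightSubmodule : Submodule (ZMod 2) (ι → ZMod 2) :=
  LinearMap.ker (∑ i, LinearMap.proj (R := ZMod 2) (φ := fun _ : ι => ZMod 2) i)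

theorem mem_evenWeightSubmodule {v : ι → ZMod 2} :
    v ∈ evenWeightSubmodule ι ↔ Even (hammingNorm v) := by
  simp only [evenWeightSubmodule, LinearMap.mem_ker, LinearMap.sum_apply,
    LinearMap.proj_apply, ZMod.two_sum_eq_hammingNorm, ZMod.natCast_eq_zero_iff_even]

theorem card_sub_one_le_finrank_evenWeightSubmodule :
    Fintype.card ι - 1 ≤ finrank (ZMod 2) (evenWeightSubmodule ι) := by
  rw [evenWeightSubmodule]
  set parity := ∑ i, LinearMap.proj (R := ZMod 2) (φ := fun _ : ι => ZMod 2) i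
  have hrank := parity.finrank_range_add_finrank_ker
  have hrange := (LinearMap.range parity).finrank_le
  rw [finrank_pi] at hrank
  rw [finrank_self] at hrange
  omega

variable [DecidableEq ι]

theorem card_filter_hammingNorm_eq_le (k : ℕ) :
    #{v : ι → ZMod 2 | hammingNorm v = k} ≤ (Fintype.card ι).choose k := by
  have hsub : ({v | hammingNorm v = k} : Finset (ι → ZMod 2)) ⊆
      (powersetCard k univ).image fun s i => if i ∈ s then (1 : ZMod 2) else 0 := by
    intro v hv
    have hone : ∀ a : ZMod 2, a = if a ≠ 0 then 1 else 0 := by decide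
    refine mem_image.2 ⟨({i | v i ≠ 0} : Finset ι),
      mem_powersetCard.2 ⟨subset_univ _, (mem_filter.1 hv).2⟩, ?_⟩
    funext i
    simp only [mem_filter, mem_univ, true_and]
    exact (hone (v i)).symm
  calc _ ≤ _ := card_le_card hsub
    _ ≤ _ := card_image_le
    _ = _ := by rw [card_powersetCard, card_univ]

theorem card_filter_even_hammingNorm_le (N : ℕ) :
    #{v : ι → ZMod 2 | Even (hammingNorm v) ∧ hammingNorm v ≤ 2 * N + 1} ≤
      ∑ j ∈ range (N + 1), (Fintype.card ι).choose (2 * j) := by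
  have hsub : ({v | Even (hammingNorm v) ∧ hammingNorm v ≤ 2 * N + 1} : Finset (ι → ZMod 2)) ⊆
      (range (N + 1)).biUnion fun j => ({v | hammingNorm v = 2 * j} : Finset (ι → ZMod 2)) := by
    intro v hv
    obtain ⟨⟨j, hj⟩, hle⟩ := (mem_filter.1 hv).2
    exact mem_biUnion.2 ⟨j, mem_range.2 (by omega), mem_filter.2 ⟨mem_univ _, by omega⟩⟩
  calc _ ≤ _ := card_le_card hsub
    _ ≤ _ := card_biUnion_le
    _ ≤ _ := sum_le_sum fun j _ => card_filter_hammingNorm_eq_le (2 * j)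

end EvenWeight

section Covering

variable {K ι : Type*} [Field K] [DecidableEq K] [Fintype ι]

/-- Otherwise `x` could be adjoined to `C`: a nonzero `c + a • x` with `a ≠ 0` has the weight
of `x - -(a⁻¹ • c)`. -/
theorem exists_hammingNorm_sub_lt_of_maximal {E C : Submodule K (ι → K)} {d : ℕ} (hd : 0 < d)
    (hC : Maximal (fun D : Submodule K (ι → K) =>
      D ≤ E ∧ ∀ v ∈ D, v ≠ 0 → d ≤ hammingNorm v) C)
    {x : ι → K} (hx : x ∈ E) : ∃ c ∈ C, hammingNorm (x - c) < d := by
  by_contra! hfar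
  have hext : C ⊔ K ∙ x ≤ E ∧ ∀ v ∈ C ⊔ K ∙ x, v ≠ 0 → d ≤ hammingNorm v := by
    refine ⟨sup_le hC.1.1 (Submodule.span_singleton_le_iff_mem x E |>.2 hx), ?_⟩
    rintro _ hv hv0
    obtain ⟨c, hc, z, hz, rfl⟩ := Submodule.mem_sup.1 hv
    obtain ⟨a, rfl⟩ := Submodule.mem_span_singleton.1 hz
    by_cases ha : a = 0
    · subst ha
      simp only [zero_smul, add_zero] at hv0 ⊢
      exact hC.1.2 c hc hv0
    · have hrw : a⁻¹ • (c + a • x) = x - -(a⁻¹ • c) := by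
        rw [smul_add, smul_smul, inv_mul_cancel₀ ha, one_smul, sub_neg_eq_add, add_comm]
      rw [← hammingNorm_smul (fun _ => IsSMulRegular.of_ne_zero (inv_ne_zero ha)), hrw]
      exact hfar _ (neg_mem (C.smul_mem _ hc))
  have hxC : x ∈ C :=
    hC.2 hext le_sup_left (Submodule.mem_sup_right (Submodule.mem_span_singleton_self x))
  simpa [hd.ne'] using hfar x hxC

end Covering

theorem Finset.card_le_card_mul_card_of_forall_exists_sub_mem {G : Type*} [AddCommGroup G]
    [DecidableEq G] {s t u : Finset G} (h : ∀ x ∈ s, ∃ c ∈ t, x - c ∈ u) : #s ≤ #t * #u := by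
  refine (card_le_card fun x hx => ?_).trans card_add_le
  obtain ⟨c, hc, hu⟩ := h x hx
  simpa only [add_sub_cancel] using add_mem_add hc hu

theorem Submodule.card_filter_mem {K V : Type*} [Field K] [Fintype K] [AddCommGroup V]
    [Module K V] [Fintype V] (C : Submodule K V) [DecidablePred (· ∈ C)] :
    #({v | v ∈ C} : Finset V) = Fintype.card K ^ finrank K C := by
  rw [← Fintype.card_subtype (fun v : V => v ∈ C), Module.card_eq_pow_finrank (K := K) (V := C)]

/-- Gilbert–Varshamov bound for even-weight codes: there exists a linear
subspace `C` of the even-weight subspace of `F_2^M`, all of whose nonzero elements have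
Hamming weight at least `2N+2`, with `dim C ≥ M - 1 - ⌈log₂(∑_{j=0}^{N} C(M, 2j))⌉`. -/
theorem stmt4 (M N : ℕ) :
    ∃ C : Submodule (ZMod 2) (Fin M → ZMod 2),
      (∀ v ∈ C, Even (hammingNorm v)) ∧
      (∀ v ∈ C, v ≠ 0 → 2 * N + 2 ≤ hammingNorm v) ∧
      M - 1 - Nat.clog 2 (∑ j ∈ Finset.range (N + 1), M.choose (2 * j)) ≤
        Module.finrank (ZMod 2) C := by
  classical
  set S := ∑ j ∈ range (N + 1), M.choose (2 * j)
  set E := evenWeightSubmodule (Fin M)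
  obtain ⟨C, hC⟩ := (Set.toFinite {D : Submodule (ZMod 2) (Fin M → ZMod 2) |
    D ≤ E ∧ ∀ v ∈ D, v ≠ 0 → 2 * N + 2 ≤ hammingNorm v}).exists_maximal ⟨⊥, bot_le, by simp⟩
  refine ⟨C, fun v hv => mem_evenWeightSubmodule.1 (hC.1.1 hv), hC.1.2, ?_⟩
  have hcover : ∀ x ∈ ({v | v ∈ E} : Finset _), ∃ c ∈ ({v | v ∈ C} : Finset _),
      x - c ∈ ({v | Even (hammingNorm v) ∧ hammingNorm v ≤ 2 * N + 1} : Finset _) := by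
    intro x hx
    have hxE := (mem_filter.1 hx).2
    obtain ⟨c, hc, hlt⟩ := exists_hammingNorm_sub_lt_of_maximal (Nat.succ_pos _) hC hxE
    refine ⟨c, mem_filter.2 ⟨mem_univ _, hc⟩, mem_filter.2 ⟨mem_univ _, ?_, by omega⟩⟩
    exact mem_evenWeightSubmodule.1 (E.sub_mem hxE (hC.1.1 hc))
  have hpow : 2 ^ (M - 1) ≤ 2 ^ (finrank (ZMod 2) C + Nat.clog 2 S) := calc
    2 ^ (M - 1) ≤ 2 ^ finrank (ZMod 2) E := Nat.pow_le_pow_right two_pos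
        (by simpa using card_sub_one_le_finrank_evenWeightSubmodule (ι := Fin M))
    _ = #{v | v ∈ E} := by rw [E.card_filter_mem, ZMod.card]
    _ ≤ #{v | v ∈ C} *
          #{v : Fin M → ZMod 2 | Even (hammingNorm v) ∧ hammingNorm v ≤ 2 * N + 1} :=
        card_le_card_mul_card_of_forall_exists_sub_mem hcover
    _ ≤ 2 ^ finrank (ZMod 2) C * 2 ^ Nat.clog 2 S := by
        rw [C.card_filter_mem, ZMod.card]
        gcongr
        simpa [S] using (card_filter_even_hammingNorm_le (ι := Fin M) N).trans
          (by simpa using Nat.le_pow_clog one_lt_two S)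
    _ = 2 ^ (finrank (ZMod 2) C + Nat.clog 2 S) := (pow_add 2 _ _).symm
  have := (Nat.pow_le_pow_iff_right one_lt_two).1 hpow
  omega
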